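/- Let w be a word on the positive integers of weight equal to the partition ν = (ν₁ > ... > ν_k > 0) of n, let v be the mirror image of w, let w₀ be the longest element of Sₙ and γ the longest element of the Young subgroup S_{ν₁} × ... × S_{ν_k}. Then st(v) = γ ∘ st(w) ∘ w₀. -/

import Mathlib

/-!
In `st(w)` the occurrences of the letter `j` receive the block of values `[B j, B (j + 1))`,
numbered from left to right. Mirroring `w` keeps every block but numbers its occurrences from
right to left, and `γ` reverses each block; so `γ ∘ st(w) ∘ w₀` is a standard permutation of the
mirror word, and standard permutations are unique.
-/

open Finset

def IsStd {n : ℕ} {A : Type} [LinearOrder A] (w : Fin n → A)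
    (s : Equiv.Perm (Fin n)) : Prop :=
  ∀ i j, s i < s j ↔ (w i < w j ∨ (w i = w j ∧ i < j))

lemma Equiv.Perm.val_eq_card_filter_lt {n : ℕ} (s : Equiv.Perm (Fin n)) (a : Fin n) :
    (s a : ℕ) = #{b | s b < s a} := by
  rw [card_equiv s (t := Iio (s a)) (by simp), Fin.card_Iio]

namespace IsStd

variable {n : ℕ} {A : Type} [LinearOrder A] {w : Fin n → A} {s t : Equiv.Perm (Fin n)}

theorem unique (hs : IsStd w s) (ht : IsStd w t) : s = t := by
  have hmono : StrictMono (s.symm.trans t) := fun x y hxy => by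
    rw [Equiv.trans_apply, Equiv.trans_apply, ht, ← hs]
    simpa using hxy
  ext a
  simpa using congrArg Fin.val (hmono.apply_eq (x := s a)).symm

theorem card_filter_lt_le (hs : IsStd w s) (a : Fin n) : #{b | w b < w a} ≤ s a := by
  rw [s.val_eq_card_filter_lt]
  exact card_le_card fun b => by simp_all [hs b a]

theorem lt_card_filter_le (hs : IsStd w s) (a : Fin n) : (s a : ℕ) < #{b | w b ≤ w a} := by
  rw [s.val_eq_card_filter_lt]
  refine card_lt_card ⟨fun b => ?_, fun hsub => ?_⟩
  · simp only [mem_filter, mem_univ, true_and, hs b a]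
    rintro (h | ⟨h, -⟩) <;> simp [h.le, h]
  · simpa using hsub (by simp : a ∈ _)

theorem comp_rev (hs : IsStd w s) (g : Equiv.Perm (Fin n))
    (hg : ∀ a b, g (s a) < g (s b) ↔ w a < w b ∨ (w a = w b ∧ s b < s a)) :
    IsStd (fun i => w i.rev) (Fin.revPerm.trans (s.trans g)) := by
  intro i j
  simp only [Equiv.trans_apply, Fin.revPerm_apply, hg, hs j.rev i.rev]
  by_cases h : w i.rev = w j.rev <;> simp [h, Fin.rev_lt_rev]

end IsStd

lemma card_filter_comp_eq_sum_card_fiber {α β : Type*} [Fintype α] [Fintype β] [DecidableEq β]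
    (f : α → β) (p : β → Prop) [DecidablePred p] :
    #{a | p (f a)} = ∑ b with p b, #{a | f a = b} := by
  rw [card_eq_sum_card_fiberwise (f := f) (t := {b | p b}) fun a => by simp]
  refine sum_congr rfl fun b hb => congrArg card ?_
  ext a
  simp only [mem_filter, mem_univ, true_and] at hb ⊢
  exact ⟨And.right, fun h => ⟨h ▸ hb, h⟩⟩

lemma reflect_lt_reflect_iff {B : ℕ → ℕ} (hB : Monotone B) {x y j j' : ℕ}
    (hx : B j ≤ x ∧ x < B (j + 1)) (hy : B j' ≤ y ∧ y < B (j' + 1)) :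
    B j + B (j + 1) - 1 - x < B j' + B (j' + 1) - 1 - y ↔ j < j' ∨ (j = j' ∧ y < x) := by
  rcases lt_trichotomy j j' with h | rfl | h
  · have := hB (show _ + 1 ≤ _ from h); omega
  · omega
  · have := hB (show _ + 1 ≤ _ from h); omega

theorem std_of_mirror_general
    {n k : ℕ} (ν : Fin k → ℕ)
    (w : Fin n → Fin k)
    (hweight : ∀ j, (Finset.univ.filter fun i => w i = j).card = ν j)
    (B : ℕ → ℕ)
    (hB : ∀ m, B m = ∑ i ∈ Finset.univ.filter (fun i : Fin k => (i : ℕ) < m), ν i)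
    (γ : Equiv.Perm (Fin n))
    (hγ : ∀ (m : Fin n) (j : ℕ), j < k → B j ≤ (m : ℕ) → (m : ℕ) < B (j + 1) →
      (γ m : ℕ) = B j + B (j + 1) - 1 - (m : ℕ))
    (sw sv : Equiv.Perm (Fin n))
    (hsw : IsStd w sw) (hsv : IsStd (fun i => w (Fin.rev i)) sv) :
    sv = Fin.revPerm.trans (sw.trans γ) := by
  have hBcard : ∀ m, B m = #{b | (w b : ℕ) < m} := fun m => by
    simp only [hB, card_filter_comp_eq_sum_card_fiber w (fun i => (i : ℕ) < m), hweight]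
  have hBmono : Monotone B := fun m m' h => by
    rw [hBcard, hBcard]
    exact card_le_card fun b => by simp only [mem_filter, mem_univ, true_and]; omega
  have hblock : ∀ a, B (w a) ≤ sw a ∧ (sw a : ℕ) < B (w a + 1) := fun a => by
    simp only [hBcard, Nat.lt_succ_iff, ← Fin.le_def, ← Fin.lt_def]
    exact ⟨hsw.card_filter_lt_le a, hsw.lt_card_filter_le a⟩
  have hγsw : ∀ a, (γ (sw a) : ℕ) = B (w a) + B (w a + 1) - 1 - sw a := fun a =>
    hγ _ _ (w a).isLt (hblock a).1 (hblock a).2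
  refine hsv.unique (hsw.comp_rev γ fun a b => ?_)
  rw [Fin.lt_def, hγsw, hγsw, reflect_lt_reflect_iff hBmono (hblock a) (hblock b)]
  simp only [Fin.val_fin_lt, Fin.val_inj]

/-- With the notation of the previous statement, if `v` is the mirror image of
`w` then `st(v) = γ ∘ st(w) ∘ w₀`. -/
theorem std_of_mirror
    {n k : ℕ} (ν : Fin k → ℕ)
    (hanti : ∀ i j : Fin k, i < j → ν j < ν i) (hpos : ∀ i, 0 < ν i)
    (hsum : ∑ i, ν i = n)
    (w : Fin n → Fin k)
    (hweight : ∀ j, (Finset.univ.filter fun i => w i = j).card = ν j)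
    (B : ℕ → ℕ)
    (hB : ∀ m, B m = ∑ i ∈ Finset.univ.filter (fun i : Fin k => (i : ℕ) < m), ν i)
    (γ : Equiv.Perm (Fin n))
    (hγ : ∀ (m : Fin n) (j : ℕ), j < k → B j ≤ (m : ℕ) → (m : ℕ) < B (j + 1) →
      (γ m : ℕ) = B j + B (j + 1) - 1 - (m : ℕ))
    (sw sv : Equiv.Perm (Fin n))
    (hsw : IsStd w sw) (hsv : IsStd (fun i => w (Fin.rev i)) sv) :
    sv = Fin.revPerm.trans (sw.trans γ) :=
  std_of_mirror_general ν w hweight B hB γ hγ sw sv hsw hsv
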